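/- arXiv:1805.07174 — 2 statements merged into one kernel-verified Lean document; each statement's English description precedes it below -/
import Mathlib

section
/- The measure $\nu(dx\,dy) = P(x,dy)\mu(dx)$ is a stationary distribution of the augmented MH kernel $K_{\mathrm{aug}}((x,y),du\,dv) = \alpha(x,y)\delta_y(du)P(y,dv) + (1-\alpha(x,y))\delta_x(du)P(x,dv)$, i.e., $\nu K_{\mathrm{aug}} = \nu$. -/
/-!
Write `g u = P(u, s_u)` for the `P`-section of a measurable `s ⊆ G × G`, so that `ν s = ∫ g dμ`.
One step of the augmented chain from `(x, y)` lands in `s` with probability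
`α(x,y) g(y) + (1 - α(x,y)) g(x)`, and integrating this against `ν = μ ⊗ P` gives exactly
`∫ g d(μK)`: the augmented chain only moves its first coordinate by a step of `K` and then
redraws the proposal from `P`. Hence `(νK_aug) s = ∫ g d(μK) = ∫ g dμ = ν s`.
-/

open MeasureTheory ProbabilityTheory ENNReal Filter

noncomputable def mhRatio {G : Type*} (ρ : G → ℝ) (p : G → G → ℝ) (x y : G) : ℝ :=
  if 0 < ρ x * p x y then ρ y * p y x / (ρ x * p x y) else 1

lemma mhRatio_nonneg {G : Type*} {ρ : G → ℝ} {p : G → G → ℝ} (hρ : ∀ x, 0 ≤ ρ x)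
    (hp : ∀ x y, 0 ≤ p x y) (x y : G) : 0 ≤ mhRatio ρ p x y := by
  unfold mhRatio
  split_ifs with h
  · exact div_nonneg (mul_nonneg (hρ y) (hp y x)) h.le
  · exact zero_le_one

section

variable {G : Type*} [MeasurableSpace G]

lemma measurable_mhRatio {ρ : G → ℝ} {p : G → G → ℝ} (hρ : Measurable ρ)
    (hp : Measurable (Function.uncurry p)) : Measurable (Function.uncurry (mhRatio ρ p)) := by
  have hden : Measurable fun q : G × G => ρ q.1 * p q.1 q.2 := (hρ.comp measurable_fst).mul hp
  have hnum : Measurable fun q : G × G => ρ q.2 * p q.2 q.1 :=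
    (hρ.comp measurable_snd).mul (hp.comp measurable_swap)
  exact Measurable.ite (measurableSet_lt measurable_const hden) (hnum.div hden) measurable_const

noncomputable def mhStep (P : Kernel G G) (α : G → G → ℝ) (x : G) : Measure G :=
  (P x).withDensity (fun y => ENNReal.ofReal (α x y)) +
    ENNReal.ofReal (∫ y, (1 - α x y) ∂(P x)) • Measure.dirac x

noncomputable def mhAugmentedStep (P : Kernel G G) (α : G → G → ℝ) (q : G × G) : Measure (G × G) :=
  ENNReal.ofReal (α q.1 q.2) • ((Measure.dirac q.2).prod (P q.2)) +
    ENNReal.ofReal (1 - α q.1 q.2) • ((Measure.dirac q.1).prod (P q.1))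

lemma MeasureTheory.Measure.dirac_prod_apply {H : Type*} [MeasurableSpace H] (x : G)
    (ν : Measure H) [SFinite ν] {s : Set (G × H)} (hs : MeasurableSet s) :
    ((Measure.dirac x).prod ν) s = ν (Prod.mk x ⁻¹' s) := by
  rw [Measure.dirac_prod, Measure.map_apply measurable_prodMk_left hs]

lemma lintegral_withDensity_add_smul_dirac (ν : Measure G) {d f : G → ℝ≥0∞} (hd : Measurable d)
    (hf : Measurable f) (c : ℝ≥0∞) (x : G) :
    ∫⁻ y, f y ∂(ν.withDensity d + c • Measure.dirac x) = ∫⁻ y, d y * f y ∂ν + c * f x := by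
  rw [lintegral_add_measure, lintegral_withDensity_eq_lintegral_mul _ hd hf,
    lintegral_smul_measure, lintegral_dirac' _ hf]
  rfl

lemma ofReal_integral_one_sub (ν : Measure G) [IsFiniteMeasure ν] {a : G → ℝ} (ha : Measurable a)
    (h0 : ∀ y, 0 ≤ a y) (h1 : ∀ y, a y ≤ 1) :
    ENNReal.ofReal (∫ y, (1 - a y) ∂ν) = ∫⁻ y, ENNReal.ofReal (1 - a y) ∂ν := by
  have hbound : ∀ y, ‖1 - a y‖ ≤ 1 := fun y => by
    rw [Real.norm_eq_abs, abs_le]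
    constructor <;> linarith [h0 y, h1 y]
  refine ofReal_integral_eq_lintegral_ofReal ?_ (ae_of_all _ fun y => sub_nonneg.2 (h1 y))
  exact Integrable.of_bound (measurable_const.sub ha).aestronglyMeasurable 1 (ae_of_all _ hbound)

theorem compProd_bind_mhAugmentedStep {μ : Measure G} [SFinite μ] {P : Kernel G G}
    [IsFiniteKernel P] {α : G → G → ℝ} (hαm : Measurable (Function.uncurry α))
    (hα0 : ∀ x y, 0 ≤ α x y) (hα1 : ∀ x y, α x y ≤ 1)
    {K : Kernel G G} (hK : ∀ x, K x = mhStep P α x)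
    {Kaug : Kernel (G × G) (G × G)} (hKaug : ∀ q, Kaug q = mhAugmentedStep P α q)
    (hstat : μ.bind K = μ) :
    (μ ⊗ₘ P).bind Kaug = μ ⊗ₘ P := by
  ext s hs
  set g : G → ℝ≥0∞ := fun u => P u (Prod.mk u ⁻¹' s)
  have hg : Measurable g := Kernel.measurable_kernel_prodMk_left hs
  have hαx : ∀ x, Measurable (α x) := fun x => hαm.comp measurable_prodMk_left
  calc ((μ ⊗ₘ P).bind Kaug) s
      = ∫⁻ x, ∫⁻ y, (ENNReal.ofReal (α x y) * g y + ENNReal.ofReal (1 - α x y) * g x) ∂P x ∂μ := by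
        rw [Measure.bind_apply hs Kaug.measurable.aemeasurable,
          Measure.lintegral_compProd (Kaug.measurable_coe hs)]
        refine lintegral_congr fun x => lintegral_congr fun y => ?_
        rw [hKaug, mhAugmentedStep, Measure.add_apply, Measure.smul_apply, Measure.smul_apply,
          Measure.dirac_prod_apply _ _ hs, Measure.dirac_prod_apply _ _ hs, smul_eq_mul,
          smul_eq_mul]
    _ = ∫⁻ x, (∫⁻ y, ENNReal.ofReal (α x y) * g y ∂P x
          + ENNReal.ofReal (∫ y, (1 - α x y) ∂P x) * g x) ∂μ := by
        refine lintegral_congr fun x => ?_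
        have hacc : Measurable fun y => ENNReal.ofReal (α x y) * g y :=
          (hαx x).ennreal_ofReal.mul hg
        have hrej : Measurable fun y => ENNReal.ofReal (1 - α x y) :=
          ((hαx x).const_sub 1).ennreal_ofReal
        rw [lintegral_add_left hacc, lintegral_mul_const _ hrej,
          ofReal_integral_one_sub _ (hαx x) (hα0 x) (hα1 x)]
    _ = ∫⁻ x, g x ∂(μ.bind K) := by
        rw [Measure.lintegral_bind K.measurable.aemeasurable hg.aemeasurable]
        refine lintegral_congr fun x => ?_
        rw [hK, mhStep, lintegral_withDensity_add_smul_dirac _ (hαx x).ennreal_ofReal hg]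
    _ = (μ ⊗ₘ P) s := by rw [hstat, Measure.compProd_apply hs]

end

theorem nu_stationary_for_Kaug_general
    {G : Type*} [MeasurableSpace G]
    (ρ : G → ℝ) (hρm : Measurable ρ) (hρ0 : ∀ x, 0 ≤ ρ x)
    (μ : Measure G) [SFinite μ]
    (P : Kernel G G) [IsMarkovKernel P]
    (p : G → G → ℝ) (hpm : Measurable (Function.uncurry p)) (hp0 : ∀ x y, 0 ≤ p x y)
    (r : G → G → ℝ)
    (hr : ∀ x y, r x y = if 0 < ρ x * p x y then ρ y * p y x / (ρ x * p x y) else 1)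
    (α : G → G → ℝ) (hα : ∀ x y, α x y = min 1 (r x y))
    (K : Kernel G G)
    (hK : ∀ x, K x = (P x).withDensity (fun y => ENNReal.ofReal (α x y)) +
      ENNReal.ofReal (∫ y, (1 - α x y) ∂(P x)) • Measure.dirac x)
    (Kaug : Kernel (G × G) (G × G))
    (hKaug : ∀ x y, Kaug (x, y) =
      ENNReal.ofReal (α x y) • ((Measure.dirac y).prod (P y)) +
      ENNReal.ofReal (1 - α x y) • ((Measure.dirac x).prod (P x)))
    (ν : Measure (G × G)) (hν : ν = μ.compProd P)
    (hstat : μ.bind (fun x => K x) = μ) :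
    ν.bind (fun q => Kaug q) = ν := by
  have hr' : r = mhRatio ρ p := funext fun x => funext (hr x)
  have hα' : α = fun x y => min 1 (mhRatio ρ p x y) := by
    rw [← hr']
    exact funext fun x => funext (hα x)
  have hαm : Measurable (Function.uncurry α) := by
    rw [hα']
    exact measurable_const.min (measurable_mhRatio hρm hpm)
  have hα0 : ∀ x y, 0 ≤ α x y := fun x y => by
    rw [hα']
    exact le_min zero_le_one (mhRatio_nonneg hρ0 hp0 x y)
  have hα1 : ∀ x y, α x y ≤ 1 := fun x y => by
    rw [hα x y]
    exact min_le_left _ _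
  rw [hν]
  exact compProd_bind_mhAugmentedStep hαm hα0 hα1 hK (fun q => hKaug q.1 q.2) hstat

/-- ν(dx dy) = P(x,dy)μ(dx) is stationary for the augmented MH
kernel. -/
theorem nu_stationary_for_Kaug
    {G : Type*} [MeasurableSpace G]
    (μ₀ : Measure G) [SigmaFinite μ₀]
    (ρ : G → ℝ) (hρm : Measurable ρ) (hρ0 : ∀ x, 0 ≤ ρ x) (hρint : Integrable ρ μ₀)
    (Z : ℝ) (hZ : Z = ∫ x, ρ x ∂μ₀) (hZpos : 0 < Z)
    (μ : Measure G) [SFinite μ]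
    (hμ : μ = μ₀.withDensity fun x => ENNReal.ofReal (ρ x / Z))
    (P : Kernel G G) [IsMarkovKernel P]
    (p : G → G → ℝ) (hpm : Measurable (Function.uncurry p)) (hp0 : ∀ x y, 0 ≤ p x y)
    (hP : ∀ x, P x = μ₀.withDensity fun y => ENNReal.ofReal (p x y))
    (hpos : ∀ x y, 0 < ρ y → 0 < p x y)
    (bar : G → G → ℝ) (hbar : ∀ x y, bar x y = if 0 < ρ y then ρ y / p x y else 0)
    (r : G → G → ℝ)
    (hr : ∀ x y, r x y = if 0 < ρ x * p x y then ρ y * p y x / (ρ x * p x y) else 1)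
    (α : G → G → ℝ) (hα : ∀ x y, α x y = min 1 (r x y))
    (K : Kernel G G) [IsMarkovKernel K]
    (hK : ∀ x, K x = (P x).withDensity (fun y => ENNReal.ofReal (α x y)) +
      ENNReal.ofReal (∫ y, (1 - α x y) ∂(P x)) • Measure.dirac x)
    (Kaug : Kernel (G × G) (G × G)) [IsMarkovKernel Kaug]
    (hKaug : ∀ x y, Kaug (x, y) =
      ENNReal.ofReal (α x y) • ((Measure.dirac y).prod (P y)) +
      ENNReal.ofReal (1 - α x y) • ((Measure.dirac x).prod (P x)))
    (ν : Measure (G × G)) (hν : ν = μ.compProd P)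
    (hstat : μ.bind (fun x => K x) = μ) :
    ν.bind (fun q => Kaug q) = ν :=
  nu_stationary_for_Kaug_general ρ hρm hρ0 μ P p hpm hp0 r hr α hα K hK Kaug hKaug ν hν hstat
end

section
/- If the MH kernel $K$ is $\phi$-irreducible for a $\sigma$-finite measure $\phi$ on $(G,\mathcal G)$, then the augmented MH kernel $K_{\mathrm{aug}}$ is $\phi_P$-irreducible on $G\times G$, where $\phi_P(dx\,dy) = P(x,dy)\phi(dx)$. That is, for every $A \in \mathcal G\otimes\mathcal G$ with $\phi_P(A) > 0$ and every $(x,y) \in G\times G$ there exists $n \in \mathbb N$ with $K_{\mathrm{aug}}^n((x,y),A) > 0$. -/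
open MeasureTheory ProbabilityTheory ENNReal

/-! Write `Π z = δ_z ⊗ P z` for the kernel `Kernel.id ×ₖ P`. It intertwines the two chains,
`Kaug ∘ Π = Π ∘ K`: from `(z, w)` with `w ~ P z` the augmented chain moves to `(w, ·)` with
probability `α z w` and to `(z, ·)` otherwise, which is exactly how `K` moves from `z`. Hence
`Kaug^(n+1) (x, y) = α x y • (Π ∘ K^n) y + (1 - α x y) • (Π ∘ K^n) x`, and one of the two
coefficients is positive. Finally `φ_P A = ∫ P u (A_u) dφ(u) > 0` makes `{u | P u (A_u) > 0}` a
`φ`-positive set, which `K^n` reaches from any point; so `(Π ∘ K^n) z A > 0` for some `n`. -/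

namespace ProbabilityTheory.Kernel

section Iterates

variable {α β : Type*} [MeasurableSpace α] [MeasurableSpace β]

lemma eq_pow_of_iterate {κ : Kernel α α} {F : ℕ → Kernel α α} (h1 : F 1 = κ)
    (hs : ∀ n, 1 ≤ n → F (n + 1) = κ ∘ₖ F n) {n : ℕ} (hn : 1 ≤ n) : F n = κ ^ n := by
  induction n, hn using Nat.le_induction with
  | base => rw [h1, pow_one]
  | succ n hn ih => rw [hs n hn, ih, pow_succ']; rfl

lemma pow_comp_eq_comp_pow {κ : Kernel β β} {ξ : Kernel α β} {η : Kernel α α}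
    (h : κ ∘ₖ ξ = ξ ∘ₖ η) (n : ℕ) : (κ ^ n) ∘ₖ ξ = ξ ∘ₖ (η ^ n) := by
  induction n with
  | zero => exact (id_comp ξ).trans (comp_id ξ).symm
  | succ n ih =>
    calc (κ ^ (n + 1)) ∘ₖ ξ = (κ ^ n) ∘ₖ (κ ∘ₖ ξ) := comp_assoc _ _ _
      _ = ξ ∘ₖ (η ^ (n + 1)) := by
        rw [h, ← comp_assoc, ih, comp_assoc]; rfl

lemma exists_pos_comp_pow_apply {η : Kernel α α} {ξ : Kernel α β} {φ : Measure α}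
    (hirr : ∀ B, MeasurableSet B → 0 < φ B → ∀ x, ∃ n, 1 ≤ n ∧ 0 < (η ^ n) x B)
    {A : Set β} (hA : MeasurableSet A) (hφA : 0 < (ξ ∘ₘ φ) A) (x : α) :
    ∃ n, 1 ≤ n ∧ 0 < (ξ ∘ₖ (η ^ n)) x A := by
  have hm : Measurable fun u => ξ u A := ξ.measurable_coe hA
  rw [Measure.bind_apply hA ξ.aemeasurable, lintegral_pos_iff_support hm] at hφA
  obtain ⟨n, hn, hpos⟩ := hirr _ (measurableSet_support hm) hφA x
  exact ⟨n, hn, by rwa [comp_apply' _ _ _ hA, lintegral_pos_iff_support hm]⟩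

end Iterates

section MetropolisHastings

variable {G γ : Type*} [MeasurableSpace G] [MeasurableSpace γ] {P : Kernel G G}
  {a : G → G → ℝ} {K : Kernel G G} {Kaug : Kernel (G × G) (G × G)}

def IsMHKernel (P : Kernel G G) (a : G → G → ℝ) (K : Kernel G G) : Prop :=
  ∀ x, K x = (P x).withDensity (fun y => ENNReal.ofReal (a x y)) +
    ENNReal.ofReal (∫ y, (1 - a x y) ∂(P x)) • Measure.dirac x

def IsAugMHKernel (P : Kernel G G) (a : G → G → ℝ) (Kaug : Kernel (G × G) (G × G)) : Prop :=
  ∀ x y, Kaug (x, y) = ENNReal.ofReal (a x y) • (Kernel.id ×ₖ P) y +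
    ENNReal.ofReal (1 - a x y) • (Kernel.id ×ₖ P) x

lemma isAugMHKernel_of_apply [IsSFiniteKernel P] (hKaug : ∀ x y, Kaug (x, y) =
      ENNReal.ofReal (a x y) • ((Measure.dirac y).prod (P y)) +
      ENNReal.ofReal (1 - a x y) • ((Measure.dirac x).prod (P x))) :
    IsAugMHKernel P a Kaug := by
  intro x y
  simp only [hKaug, prod_apply, id_apply]

lemma IsMHKernel.lintegral_eq [IsFiniteKernel P] (hK : IsMHKernel P a K)
    (ha : Measurable (Function.uncurry a)) (ha0 : ∀ x y, 0 ≤ a x y) (ha1 : ∀ x y, a x y ≤ 1)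
    (z : G) {g : G → ℝ≥0∞} (hg : Measurable g) :
    ∫⁻ u, g u ∂(K z) =
      ∫⁻ w, (ENNReal.ofReal (a z w) * g w + ENNReal.ofReal (1 - a z w) * g z) ∂(P z) := by
  have haz : Measurable (a z) := ha.comp measurable_prodMk_left
  have hrej : ENNReal.ofReal (∫ w, (1 - a z w) ∂(P z))
      = ∫⁻ w, ENNReal.ofReal (1 - a z w) ∂(P z) := by
    refine ofReal_integral_eq_lintegral_ofReal ?_ (ae_of_all _ fun w => sub_nonneg.2 (ha1 z w))
    refine Integrable.of_bound (measurable_const.sub haz).aestronglyMeasurable 1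
      (ae_of_all _ fun w => ?_)
    rw [Real.norm_eq_abs, abs_le]
    constructor <;> linarith [ha0 z w, ha1 z w]
  rw [hK z, lintegral_add_measure, lintegral_smul_measure, lintegral_dirac' _ hg,
    lintegral_withDensity_eq_lintegral_mul _ haz.ennreal_ofReal hg, hrej,
    lintegral_add_left (f := fun w => ENNReal.ofReal (a z w) * g w) (haz.ennreal_ofReal.mul hg),
    lintegral_mul_const (f := fun w => ENNReal.ofReal (1 - a z w)) _
      (measurable_const.sub haz).ennreal_ofReal]
  rfl

lemma IsAugMHKernel.comp_apply (hKaug : IsAugMHKernel P a Kaug) (κ : Kernel (G × G) γ)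
    (x y : G) :
    (κ ∘ₖ Kaug) (x, y) = ENNReal.ofReal (a x y) • (κ ∘ₖ (Kernel.id ×ₖ P)) y +
      ENNReal.ofReal (1 - a x y) • (κ ∘ₖ (Kernel.id ×ₖ P)) x := by
  rw [Kernel.comp_apply, hKaug, Measure.comp_add, Measure.comp_smul, Measure.comp_smul,
    Kernel.comp_apply, Kernel.comp_apply]

lemma IsAugMHKernel.comp_id_prod [IsFiniteKernel P] (hKaug : IsAugMHKernel P a Kaug)
    (hK : IsMHKernel P a K) (ha : Measurable (Function.uncurry a)) (ha0 : ∀ x y, 0 ≤ a x y)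
    (ha1 : ∀ x y, a x y ≤ 1) :
    Kaug ∘ₖ (Kernel.id ×ₖ P) = (Kernel.id ×ₖ P) ∘ₖ K := by
  refine ext_fun fun z f hf => ?_
  have hg : Measurable fun u => ∫⁻ q, f q ∂(Kernel.id ×ₖ P) u := hf.lintegral_kernel
  rw [lintegral_comp _ _ _ hf, lintegral_comp _ _ _ hf, hK.lintegral_eq ha ha0 ha1 z hg,
    lintegral_id_prod (f := fun q => ∫⁻ c, f c ∂Kaug q) hf.lintegral_kernel]
  refine lintegral_congr fun w => ?_
  rw [hKaug, lintegral_add_measure, lintegral_smul_measure, lintegral_smul_measure]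
  rfl

lemma IsAugMHKernel.pow_succ_apply [IsFiniteKernel P] (hKaug : IsAugMHKernel P a Kaug)
    (hK : IsMHKernel P a K) (ha : Measurable (Function.uncurry a)) (ha0 : ∀ x y, 0 ≤ a x y)
    (ha1 : ∀ x y, a x y ≤ 1) (n : ℕ) (x y : G) :
    (Kaug ^ (n + 1)) (x, y) = ENNReal.ofReal (a x y) • ((Kernel.id ×ₖ P) ∘ₖ (K ^ n)) y +
      ENNReal.ofReal (1 - a x y) • ((Kernel.id ×ₖ P) ∘ₖ (K ^ n)) x := by
  rw [pow_succ, ← pow_comp_eq_comp_pow (hKaug.comp_id_prod hK ha ha0 ha1)]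
  exact hKaug.comp_apply _ x y

lemma IsAugMHKernel.exists_pos_pow_apply [IsFiniteKernel P] {φ : Measure G} [SFinite φ]
    (hKaug : IsAugMHKernel P a Kaug) (hK : IsMHKernel P a K)
    (ha : Measurable (Function.uncurry a)) (ha0 : ∀ x y, 0 ≤ a x y) (ha1 : ∀ x y, a x y ≤ 1)
    (hirr : ∀ B, MeasurableSet B → 0 < φ B → ∀ x, ∃ n, 1 ≤ n ∧ 0 < (K ^ n) x B)
    {A : Set (G × G)} (hA : MeasurableSet A) (hφA : 0 < (φ ⊗ₘ P) A) (q : G × G) :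
    ∃ n, 1 ≤ n ∧ 0 < (Kaug ^ n) q A := by
  obtain ⟨x, y⟩ := q
  rw [Measure.compProd_eq_comp_prod] at hφA
  by_cases hlt : a x y < 1
  · obtain ⟨n, hn, hpos⟩ := exists_pos_comp_pow_apply hirr hA hφA x
    refine ⟨n + 1, by omega, ?_⟩
    rw [hKaug.pow_succ_apply hK ha ha0 ha1]
    exact (ENNReal.mul_pos (ofReal_pos.2 (sub_pos.2 hlt)).ne' hpos.ne').trans_le le_add_self
  · obtain ⟨n, hn, hpos⟩ := exists_pos_comp_pow_apply hirr hA hφA y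
    refine ⟨n + 1, by omega, ?_⟩
    rw [hKaug.pow_succ_apply hK ha ha0 ha1]
    exact (ENNReal.mul_pos (ofReal_pos.2 (by linarith)).ne' hpos.ne').trans_le le_self_add

end MetropolisHastings

end ProbabilityTheory.Kernel

noncomputable def mhAcceptance {G : Type*} (ρ : G → ℝ) (p : G → G → ℝ) (x y : G) : ℝ :=
  min 1 (if 0 < ρ x * p x y then ρ y * p y x / (ρ x * p x y) else 1)

lemma measurable_mhAcceptance {G : Type*} [MeasurableSpace G] {ρ : G → ℝ} {p : G → G → ℝ}
    (hρ : Measurable ρ) (hp : Measurable (Function.uncurry p)) :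
    Measurable (Function.uncurry (mhAcceptance ρ p)) := by
  have hfwd : Measurable fun q : G × G => ρ q.1 * p q.1 q.2 := (hρ.comp measurable_fst).mul hp
  have hbwd : Measurable fun q : G × G => ρ q.2 * p q.2 q.1 :=
    (hρ.comp measurable_snd).mul (hp.comp measurable_swap)
  exact measurable_const.min <|
    Measurable.ite (measurableSet_lt measurable_const hfwd) (hbwd.div hfwd) measurable_const

lemma mhAcceptance_nonneg {G : Type*} {ρ : G → ℝ} {p : G → G → ℝ} (hρ : ∀ x, 0 ≤ ρ x)
    (hp : ∀ x y, 0 ≤ p x y) (x y : G) : 0 ≤ mhAcceptance ρ p x y := by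
  refine le_min zero_le_one ?_
  split_ifs with h
  · exact div_nonneg (mul_nonneg (hρ y) (hp y x)) h.le
  · exact zero_le_one

lemma mhAcceptance_le_one {G : Type*} (ρ : G → ℝ) (p : G → G → ℝ) (x y : G) :
    mhAcceptance ρ p x y ≤ 1 :=
  min_le_left _ _

theorem Kaug_irreducible_general
    {G : Type*} [MeasurableSpace G]
    (ρ : G → ℝ) (hρm : Measurable ρ) (hρ0 : ∀ x, 0 ≤ ρ x)
    (P : Kernel G G) [IsMarkovKernel P]
    (p : G → G → ℝ) (hpm : Measurable (Function.uncurry p)) (hp0 : ∀ x y, 0 ≤ p x y)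
    (r : G → G → ℝ)
    (hr : ∀ x y, r x y = if 0 < ρ x * p x y then ρ y * p y x / (ρ x * p x y) else 1)
    (α : G → G → ℝ) (hα : ∀ x y, α x y = min 1 (r x y))
    (K : Kernel G G)
    (hK : ∀ x, K x = (P x).withDensity (fun y => ENNReal.ofReal (α x y)) +
      ENNReal.ofReal (∫ y, (1 - α x y) ∂(P x)) • Measure.dirac x)
    (Kaug : Kernel (G × G) (G × G))
    (hKaug : ∀ x y, Kaug (x, y) =
      ENNReal.ofReal (α x y) • ((Measure.dirac y).prod (P y)) +
      ENNReal.ofReal (1 - α x y) • ((Measure.dirac x).prod (P x)))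
    (KP : ℕ → Kernel G G) (hKP1 : KP 1 = K)
    (hKPs : ∀ n, 1 ≤ n → KP (n + 1) = K ∘ₖ KP n)
    (KaugP : ℕ → Kernel (G × G) (G × G)) (hKaugP1 : KaugP 1 = Kaug)
    (hKaugPs : ∀ n, 1 ≤ n → KaugP (n + 1) = Kaug ∘ₖ KaugP n)
    (φ : Measure G) [SigmaFinite φ]
    (hirr : ∀ A : Set G, MeasurableSet A → 0 < φ A →
      ∀ x : G, ∃ n, 1 ≤ n ∧ 0 < KP n x A) :
    ∀ A : Set (G × G), MeasurableSet A → 0 < (φ.compProd P) A →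
      ∀ q : G × G, ∃ n, 1 ≤ n ∧ 0 < KaugP n q A := by
  have hαeq : α = mhAcceptance ρ p := funext₂ fun x y => by rw [hα, hr]; rfl
  subst hαeq
  have hirrK : ∀ B, MeasurableSet B → 0 < φ B → ∀ x, ∃ n, 1 ≤ n ∧ 0 < (K ^ n) x B :=
    fun B hB hφB x => by
      obtain ⟨n, hn, hpos⟩ := hirr B hB hφB x
      exact ⟨n, hn, Kernel.eq_pow_of_iterate hKP1 hKPs hn ▸ hpos⟩
  intro A hA hφA q
  obtain ⟨n, hn, hpos⟩ := (Kernel.isAugMHKernel_of_apply hKaug).exists_pos_pow_apply hK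
    (measurable_mhAcceptance hρm hpm) (mhAcceptance_nonneg hρ0 hp0) (mhAcceptance_le_one ρ p)
    hirrK hA hφA q
  exact ⟨n, hn, Kernel.eq_pow_of_iterate hKaugP1 hKaugPs hn ▸ hpos⟩

/-- If the MH kernel K is φ-irreducible then the augmented MH
kernel is φ_P-irreducible, where φ_P(dx dy) = P(x,dy) φ(dx). -/
theorem Kaug_irreducible
    {G : Type*} [MeasurableSpace G]
    (μ₀ : Measure G) [SigmaFinite μ₀]
    (ρ : G → ℝ) (hρm : Measurable ρ) (hρ0 : ∀ x, 0 ≤ ρ x) (hρint : Integrable ρ μ₀)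
    (Z : ℝ) (hZ : Z = ∫ x, ρ x ∂μ₀) (hZpos : 0 < Z)
    (μ : Measure G) [SFinite μ]
    (hμ : μ = μ₀.withDensity fun x => ENNReal.ofReal (ρ x / Z))
    (P : Kernel G G) [IsMarkovKernel P]
    (p : G → G → ℝ) (hpm : Measurable (Function.uncurry p)) (hp0 : ∀ x y, 0 ≤ p x y)
    (hP : ∀ x, P x = μ₀.withDensity fun y => ENNReal.ofReal (p x y))
    (hpos : ∀ x y, 0 < ρ y → 0 < p x y)
    (bar : G → G → ℝ) (hbar : ∀ x y, bar x y = if 0 < ρ y then ρ y / p x y else 0)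
    (r : G → G → ℝ)
    (hr : ∀ x y, r x y = if 0 < ρ x * p x y then ρ y * p y x / (ρ x * p x y) else 1)
    (α : G → G → ℝ) (hα : ∀ x y, α x y = min 1 (r x y))
    (K : Kernel G G) [IsMarkovKernel K]
    (hK : ∀ x, K x = (P x).withDensity (fun y => ENNReal.ofReal (α x y)) +
      ENNReal.ofReal (∫ y, (1 - α x y) ∂(P x)) • Measure.dirac x)
    (Kaug : Kernel (G × G) (G × G)) [IsMarkovKernel Kaug]
    (hKaug : ∀ x y, Kaug (x, y) =
      ENNReal.ofReal (α x y) • ((Measure.dirac y).prod (P y)) +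
      ENNReal.ofReal (1 - α x y) • ((Measure.dirac x).prod (P x)))
    (KP : ℕ → Kernel G G) (hKP1 : KP 1 = K)
    (hKPs : ∀ n, 1 ≤ n → KP (n + 1) = K ∘ₖ KP n)
    (KaugP : ℕ → Kernel (G × G) (G × G)) (hKaugP1 : KaugP 1 = Kaug)
    (hKaugPs : ∀ n, 1 ≤ n → KaugP (n + 1) = Kaug ∘ₖ KaugP n)
    (φ : Measure G) [SigmaFinite φ]
    (hirr : ∀ A : Set G, MeasurableSet A → 0 < φ A →
      ∀ x : G, ∃ n, 1 ≤ n ∧ 0 < KP n x A) :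
    ∀ A : Set (G × G), MeasurableSet A → 0 < (φ.compProd P) A →
      ∀ q : G × G, ∃ n, 1 ≤ n ∧ 0 < KaugP n q A :=
  Kaug_irreducible_general ρ hρm hρ0 P p hpm hp0 r hr α hα K hK Kaug hKaug KP hKP1 hKPs KaugP
    hKaugP1 hKaugPs φ hirr
end
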